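/- Let H = Σ_ν E_ν|ν⟩⟨ν| be a Hermitian operator on a finite-dimensional Hilbert space of N sites, let ρ_T = e^{−H/T}/Z(T) be its Gibbs state at temperature T > 0, and define Z(T,e,δ) := Σ_{ν∈M_{e,δ}} e^{−E_ν/T}. Let e ∈ ℝ, δ > 0 with M_{e,δ} ≠ ∅, and let ẽ ∈ ℝ, δ̃ > 0 with M_{ẽ,δ̃} ≠ ∅. Then for every density matrix τ supported on span{|ν⟩ : ν ∈ M_{e,δ}}, S(τ‖ρ_T) ≤ −S(τ) + log( (Z(T)/Z(T,ẽ,δ̃)) · |M_{ẽ,δ̃}| · e^{(eN − ẽN + δ√N + δ̃√N)/T} ). -/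

import Mathlib

open scoped BigOperators Kronecker ComplexOrder

noncomputable section

namespace EquivEnsembles

/-! ### Generic linear-algebraic notions -/

variable {ι : Type*} [Fintype ι] [DecidableEq ι]

/-- The operator norm of a matrix, via its action on Euclidean space. -/
def opNorm (A : Matrix ι ι ℂ) : ℝ := ‖Matrix.toEuclideanCLM (𝕜 := ℂ) A‖

/-- The trace norm `‖A‖₁ = tr √(AᴴA)` of a matrix. -/
def traceNorm (A : Matrix ι ι ℂ) : ℝ :=
  ((((Matrix.posSemidef_conjTranspose_mul_self A).1.eigenvectorUnitary : Matrix ι ι ℂ) *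
    Matrix.diagonal (((↑) : ℝ → ℂ) ∘ (√·) ∘ (Matrix.posSemidef_conjTranspose_mul_self A).1.eigenvalues) *
    (star (Matrix.posSemidef_conjTranspose_mul_self A).1.eigenvectorUnitary : Matrix ι ι ℂ))).trace.re

/-- A density matrix: positive semidefinite with unit trace. -/
def IsDensity (ρ : Matrix ι ι ℂ) : Prop := ρ.PosSemidef ∧ ρ.trace = 1

/-- Functional calculus for (Hermitian) matrices, via the spectral theorem;
junk value `0` on non-Hermitian matrices. -/
def mfun (f : ℝ → ℝ) (A : Matrix ι ι ℂ) : Matrix ι ι ℂ :=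
  if h : A.IsHermitian then
    (h.eigenvectorUnitary : Matrix ι ι ℂ) *
      Matrix.diagonal (fun i => (f (h.eigenvalues i) : ℂ)) *
      (star h.eigenvectorUnitary : Matrix ι ι ℂ)
  else 0

/-- Matrix logarithm, base 2. -/
def mlog2 (A : Matrix ι ι ℂ) : Matrix ι ι ℂ := mfun (Real.logb 2) A

/-- Matrix logarithm, base e. -/
def mln (A : Matrix ι ι ℂ) : Matrix ι ι ℂ := mfun Real.log A

/-- Moore-Penrose pseudoinverse (of a Hermitian matrix; junk value `0` otherwise). -/
def hpinv (A : Matrix ι ι ℂ) : Matrix ι ι ℂ := mfun (fun x => x⁻¹) A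

/-- Quantum relative entropy `S(τ‖ρ) = tr (τ (log τ − log ρ))` (base-2 logarithms). -/
def relEnt (τ ρ : Matrix ι ι ℂ) : ℝ := (τ * (mlog2 τ - mlog2 ρ)).trace.re

/-- Von Neumann entropy (base-2 logarithm). -/
def vnEnt (τ : Matrix ι ι ℂ) : ℝ := -(τ * mlog2 τ).trace.re

/-- Von Neumann entropy (natural logarithm). -/
def vnEntNat (τ : Matrix ι ι ℂ) : ℝ := -(τ * mln τ).trace.re

/-- Max-relative entropy `S_max(τ‖ρ) = min {λ : τ ≤ 2^λ ρ}`. -/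
def smax (τ ρ : Matrix ι ι ℂ) : ℝ :=
  sInf {lam : ℝ | (((2:ℝ) ^ lam) • ρ - τ).PosSemidef}

/-- The Gibbs state `e^{-H/T}/Z(T)` of a Hamiltonian `H` at temperature `T`. -/
def gibbs (H : Matrix ι ι ℂ) (T : ℝ) : Matrix ι ι ℂ :=
  ((NormedSpace.exp ((-(T : ℂ))⁻¹ • H)).trace)⁻¹ • NormedSpace.exp ((-(T : ℂ))⁻¹ • H)

/-- The partition function `Z(T) = tr e^{-H/T}`. -/
def partZ (H : Matrix ι ι ℂ) (T : ℝ) : ℂ := (NormedSpace.exp ((-(T : ℂ))⁻¹ • H)).trace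

/-- Energy density `u(T)` (with `N` sites). -/
def uT (H : Matrix ι ι ℂ) (T : ℝ) (N : ℕ) : ℝ := (H * gibbs H T).trace.re / N

/-- Specific heat capacity `c(T)` (with `N` sites). -/
def cT (H : Matrix ι ι ℂ) (T : ℝ) (N : ℕ) : ℝ :=
  ((H * H * gibbs H T).trace.re - ((H * gibbs H T).trace.re) ^ 2) / (N * T ^ 2)

/-- Entropy density `s(T)` (with `N` sites, natural logarithm). -/
def sT (H : Matrix ι ι ℂ) (T : ℝ) (N : ℕ) : ℝ := vnEntNat (gibbs H T) / N

/-- The rank-one spectral projection `|ν⟩⟨ν|` onto the `ν`-th eigenvector of a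
Hermitian matrix. -/
def eigProj {A : Matrix ι ι ℂ} (hA : A.IsHermitian) (ν : ι) : Matrix ι ι ℂ :=
  (hA.eigenvectorUnitary : Matrix ι ι ℂ) * Matrix.single ν ν 1 *
    (star hA.eigenvectorUnitary : Matrix ι ι ℂ)

/-- The microcanonical index set `M_{e,δ} = {ν : |E_ν − eN| ≤ δ√N}`. -/
def microSet {A : Matrix ι ι ℂ} (hA : A.IsHermitian) (e δ : ℝ) (N : ℕ) : Finset ι :=
  Finset.univ.filter fun ν => |hA.eigenvalues ν - e * N| ≤ δ * Real.sqrt N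

/-- The microcanonical state `τ_{e,δ}`. -/
def microState {A : Matrix ι ι ℂ} (hA : A.IsHermitian) (e δ : ℝ) (N : ℕ) : Matrix ι ι ℂ :=
  (((microSet hA e δ N).card : ℂ))⁻¹ • ∑ ν ∈ microSet hA e δ N, eigProj hA ν

/-- The restricted partition function `Z(T,e,δ) = Σ_{ν ∈ M_{e,δ}} e^{−E_ν/T}`. -/
def partZmicro {A : Matrix ι ι ℂ} (hA : A.IsHermitian) (T e δ : ℝ) (N : ℕ) : ℝ :=
  ∑ ν ∈ microSet hA e δ N, Real.exp (-(hA.eigenvalues ν) / T)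

/-- `τ` is supported on the span of the eigenvectors indexed by `M`. -/
def SupportedOn {A : Matrix ι ι ℂ} (hA : A.IsHermitian) (M : Finset ι)
    (τ : Matrix ι ι ℂ) : Prop :=
  (∑ ν ∈ M, eigProj hA ν) * τ * (∑ ν ∈ M, eigProj hA ν) = τ


/-! ### Many-body systems on a set `V` of sites -/

variable {V : Type*} [Fintype V] [DecidableEq V] {D : ℕ}

/-- Basis configurations of `⊗_{v ∈ V} ℂ^D`. -/
abbrev Cfg (V : Type*) (D : ℕ) := V → Fin D

/-- Basis configurations on a region `X ⊆ V`. -/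
abbrev CfgOn (D : ℕ) {V : Type*} (X : Finset V) := {x : V // x ∈ X} → Fin D

/-- Splitting a configuration into its parts on `X` and on the complement of `X`. -/
def cfgSplit (D : ℕ) (X : Finset V) :
    Cfg V D ≃ ({x : V // x ∈ X} → Fin D) × ({x : V // ¬ x ∈ X} → Fin D) :=
  Equiv.piEquivPiSubtypeProd (fun x => x ∈ X) fun _ => Fin D

/-- The reduced state `ρ_X = tr_{V∖X} ρ` on the region `X`. -/
def reduce (X : Finset V) (ρ : Matrix (Cfg V D) (Cfg V D) ℂ) :
    Matrix (CfgOn D X) (CfgOn D X) ℂ := fun a b =>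
  ∑ h : {x : V // ¬ x ∈ X} → Fin D,
    ρ ((cfgSplit D X).symm (a, h)) ((cfgSplit D X).symm (b, h))

/-- The embedding `P ↦ P ⊗ 𝟙` of an operator on region `X` into the full system. -/
def embed (X : Finset V) (P : Matrix (CfgOn D X) (CfgOn D X) ℂ) :
    Matrix (Cfg V D) (Cfg V D) ℂ :=
  Matrix.submatrix (P ⊗ₖ (1 : Matrix ({x : V // ¬ x ∈ X} → Fin D) ({x : V // ¬ x ∈ X} → Fin D) ℂ))
    (cfgSplit D X) (cfgSplit D X)

/-- An operator acts only on the region `X` if it is of the form `P ⊗ 𝟙`. -/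
def ActsOn (A : Matrix (Cfg V D) (Cfg V D) ℂ) (X : Finset V) : Prop :=
  ∃ P, A = embed X P

/-- The correlation
`cor_ρ(X,Y) = max |tr((P⊗Q)(ρ_{XY} − ρ_X ⊗ ρ_Y))|` over `‖P‖,‖Q‖ ≤ 1` supported on
`X` resp. `Y`; expressed via operators embedded in the full system (for disjoint
`X`, `Y`, `tr((P⊗Q)ρ_{XY}) = tr(P̂ Q̂ ρ)` and `tr((P⊗Q)(ρ_X⊗ρ_Y)) = tr(P̂ρ) tr(Q̂ρ)`). -/
def corr (ρ : Matrix (Cfg V D) (Cfg V D) ℂ) (X Y : Finset V) : ℝ :=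
  sSup {r : ℝ | ∃ (P : Matrix (CfgOn D X) (CfgOn D X) ℂ) (Q : Matrix (CfgOn D Y) (CfgOn D Y) ℂ),
    opNorm P ≤ 1 ∧ opNorm Q ≤ 1 ∧
    r = ‖(embed X P * embed Y Q * ρ).trace -
          (embed X P * ρ).trace * (embed Y Q * ρ).trace‖}

/-- The product state `⊗_{v ∈ V} ρ_v` of single-site states. -/
def prodState (ρs : V → Matrix (Fin D) (Fin D) ℂ) : Matrix (Cfg V D) (Cfg V D) ℂ :=
  fun f g => ∏ v, ρs v (f v) (g v)

/-- The single-site reduced state `ρ_{\{v\}}` as a `D×D` matrix. -/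
def reduce1 (v : V) (ρ : Matrix (Cfg V D) (Cfg V D) ℂ) : Matrix (Fin D) (Fin D) ℂ :=
  fun a b => ∑ h : {x : V // x ≠ v} → Fin D,
    ρ (fun x => if hx : x = v then a else h ⟨x, hx⟩)
      (fun x => if hx : x = v then b else h ⟨x, hx⟩)

/-- The tensor product `⊗_j ρ_j` of states on pairwise disjoint regions `C j`,
as a state on the union of the regions. -/
def tensorOver {M : ℕ} (C : Fin M → Finset V)
    (ρs : ∀ j, Matrix (CfgOn D (C j)) (CfgOn D (C j)) ℂ) :
    Matrix (CfgOn D (Finset.univ.biUnion C)) (CfgOn D (Finset.univ.biUnion C)) ℂ :=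
  fun f g => ∏ j, ρs j
    (fun x => f ⟨x.1, Finset.mem_biUnion.mpr ⟨j, Finset.mem_univ j, x.2⟩⟩)
    (fun x => g ⟨x.1, Finset.mem_biUnion.mpr ⟨j, Finset.mem_univ j, x.2⟩⟩)


/-! ### The lattice `Λ = {1,…,n}^d` -/

/-- A site of the lattice `Λ = {1,…,n}^d`. -/
abbrev Site (d n : ℕ) := Fin d → Fin n

/-- Manhattan distance between two lattice sites. -/
def siteDist {d n : ℕ} (x y : Site d n) : ℕ := ∑ a, ((x a : ℤ) - (y a : ℤ)).natAbs

/-- Distance between two regions of the lattice. -/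
def setDist {d n : ℕ} (X Y : Finset (Site d n)) : ℕ :=
  sInf {m | ∃ x ∈ X, ∃ y ∈ Y, siteDist x y = m}

/-- The ball of radius `k` around site `i` (in Manhattan distance). -/
def ball {d n : ℕ} (i : Site d n) (k : ℕ) : Finset (Site d n) :=
  Finset.univ.filter fun j => siteDist i j ≤ k

/-- The hypercube with edge length `l` and corner `c`. -/
def cube {d n : ℕ} (l : ℕ) (c : Fin d → Fin (n - l + 1)) : Finset (Site d n) :=
  Finset.univ.filter fun x => ∀ a, (c a : ℕ) ≤ (x a : ℕ) ∧ (x a : ℕ) < (c a : ℕ) + l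

/-- The uniform average over all hypercubes of edge length `l` contained in the lattice. -/
def cubeAvg {d n : ℕ} (l : ℕ) (f : Finset (Site d n) → ℝ) : ℝ :=
  (∑ c : Fin d → Fin (n - l + 1), f (cube l c)) / ((n - l + 1) ^ d : ℕ)


/-- The nonnegative real branch of the Lambert `W` function: for `x ≥ 0`,
`W x` is the unique `w ≥ 0` with `w e^w = x`. -/
def lambertW (x : ℝ) : ℝ := sSup {w : ℝ | 0 ≤ w ∧ w * Real.exp w ≤ x}

/-- The quantity `Δ_{k,ξ,z,T}` (with `C` the dimension-dependent constant, `c = c(T)`). -/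
def DeltaBE (C : ℝ) (d k : ℕ) (ξ z T c : ℝ) (N : ℕ) : ℝ :=
  C * (max (k : ℝ) ξ * (z + 1)) ^ (2 * d) / Real.sqrt (T ^ 2 * c) *
    max (1 / (max (k : ℝ) ξ * (z + 1) * Real.log N)) (1 / (T ^ 2 * c))


/-! ### Local Hamiltonians and decaying correlations on the lattice -/

variable {d n D : ℕ}

/-- The state `ρ` has `(ξ,z)`-exponentially decaying correlations. -/
def HasDecay (ρ : Matrix (Cfg (Site d n) D) (Cfg (Site d n) D) ℂ) (ξ z : ℝ) : Prop :=
  ∀ X Y : Finset (Site d n), 0 < setDist X Y →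
    corr ρ X Y ≤ ((n ^ d : ℕ) : ℝ) ^ z * Real.exp (-(setDist X Y : ℝ) / ξ)

/-- The family `Hloc` of local terms is a `k`-local Hamiltonian: each term has norm
at most one and acts only on sites at distance at most `k` from its center. -/
def IsKLocal (Hloc : Site d n → Matrix (Cfg (Site d n) D) (Cfg (Site d n) D) ℂ)
    (k : ℕ) : Prop :=
  ∀ i, opNorm (Hloc i) ≤ 1 ∧ ActsOn (Hloc i) (ball i k)


/-! ### Miscellaneous -/

/-- Reduction of a state on a dependent tensor product `⊗_j H_{A_j}` to the `j`-th factor. -/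
def reduceAt {M : ℕ} {ι : Fin M → Type*} [∀ j, Fintype (ι j)] [∀ j, DecidableEq (ι j)]
    (j : Fin M) (π : Matrix (∀ i, ι i) (∀ i, ι i) ℂ) : Matrix (ι j) (ι j) ℂ :=
  fun a b => ∑ f : ∀ i, ι i, ∑ g : ∀ i, ι i,
    if f j = a ∧ g j = b ∧ ∀ i, i ≠ j → f i = g i then π f g else 0

/-- The tensor product `ρ₁ ⊗ ⋯ ⊗ ρ_M` on a dependent tensor product `⊗_j H_{A_j}`. -/
def prodDep {M : ℕ} {ι : Fin M → Type*} [∀ j, Fintype (ι j)] [∀ j, DecidableEq (ι j)]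
    (ρs : ∀ j, Matrix (ι j) (ι j) ℂ) : Matrix (∀ i, ι i) (∀ i, ι i) ℂ :=
  fun f g => ∏ j, ρs j (f j) (g j)

/-- The pure state `|ψ⟩⟨ψ|` where `ψ = Σ_{ν ∈ M} c_ν |ν⟩` is the vector of the span of
the eigenvectors `{|ν⟩ : ν ∈ M}` with coordinate vector `c`. -/
def pureFromCoords {ι : Type*} [Fintype ι] [DecidableEq ι] {A : Matrix ι ι ℂ}
    (hA : A.IsHermitian) (M : Finset ι) (c : EuclideanSpace ℂ {ν // ν ∈ M}) :
    Matrix ι ι ℂ :=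
  Matrix.vecMulVec
    (fun x => ∑ ν : {ν // ν ∈ M}, c ν * (hA.eigenvectorUnitary : Matrix ι ι ℂ) x ν.1)
    (fun y => starRingEnd ℂ
      (∑ ν : {ν // ν ∈ M}, c ν * (hA.eigenvectorUnitary : Matrix ι ι ℂ) y ν.1))

/-!
In the eigenbasis `|ν⟩` of `H` the Gibbs state is diagonal, so `log₂ ρ_T` has eigenvalues
`-log₂ (Z(T) e^{E_ν/T})` and `S(τ‖ρ_T) = -S(τ) + Σ_ν p_ν log₂ (Z(T) e^{E_ν/T})`, where the
populations `p_ν = ⟨ν|τ|ν⟩` form a probability vector supported on `M_{e,δ}`. On `M_{e,δ}` we have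
`E_ν ≤ eN + δ√N`, while every term of `Z(T,ẽ,δ̃)` is at most `e^{(δ̃√N - ẽN)/T}`; multiplying by
`|M_{ẽ,δ̃}| e^{(δ̃√N - ẽN)/T} / Z(T,ẽ,δ̃) ≥ 1` gives the bound.
-/

section FunctionalCalculus

open Matrix

variable {ι : Type*} [Fintype ι] [DecidableEq ι] {A : Matrix ι ι ℂ}

lemma mfun_eq_cfc (hA : A.IsHermitian) (f : ℝ → ℝ) : mfun f A = cfc f A := by
  rw [mfun, dif_pos hA, hA.cfc_eq, IsHermitian.cfc, Unitary.conjStarAlgAut_apply]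
  rfl

lemma exp_real_smul_eq_cfc (hA : A.IsHermitian) (c : ℝ) :
    NormedSpace.exp ((c : ℂ) • A) = cfc (fun x => Real.exp (c * x)) A := by
  set U : Matrix ι ι ℂ := (hA.eigenvectorUnitary : Matrix ι ι ℂ)
  have hU : IsUnit U := (Matrix.isUnit_iff_isUnit_det U).mpr
    (Matrix.UnitaryGroup.det_isUnit hA.eigenvectorUnitary)
  have hinv : U⁻¹ = star U := Matrix.inv_eq_left_inv hA.eigenvectorUnitary.2.1
  rw [hA.cfc_eq, IsHermitian.cfc, Unitary.conjStarAlgAut_apply]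
  conv_lhs => rw [hA.spectral_theorem, Unitary.conjStarAlgAut_apply, ← smul_mul_assoc,
    ← mul_smul_comm, ← diagonal_smul, ← hinv, Matrix.exp_conj _ _ hU, Matrix.exp_diagonal]
  congr 3
  ext i
  simp [← Complex.exp_eq_exp_ℂ]

lemma trace_mul_cfc (hA : A.IsHermitian) (τ : Matrix ι ι ℂ) (f : ℝ → ℝ) :
    (τ * cfc f A).trace = ∑ i, (star (hA.eigenvectorUnitary : Matrix ι ι ℂ) * τ *
      (hA.eigenvectorUnitary : Matrix ι ι ℂ)) i i * f (hA.eigenvalues i) := by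
  rw [hA.cfc_eq, IsHermitian.cfc, Unitary.conjStarAlgAut_apply, ← mul_assoc, ← mul_assoc,
    trace_mul_comm, ← mul_assoc, ← mul_assoc]
  simp [trace, mul_diagonal]

def occupation (hA : A.IsHermitian) (τ : Matrix ι ι ℂ) (ν : ι) : ℝ :=
  ((star (hA.eigenvectorUnitary : Matrix ι ι ℂ) * τ * (hA.eigenvectorUnitary : Matrix ι ι ℂ))
    ν ν).re

lemma occupation_nonneg (hA : A.IsHermitian) {τ : Matrix ι ι ℂ} (hτ : τ.PosSemidef) (ν : ι) :
    0 ≤ occupation hA τ ν := by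
  have := (hτ.conjTranspose_mul_mul_same (hA.eigenvectorUnitary : Matrix ι ι ℂ)).diag_nonneg
    (i := ν)
  exact (Complex.nonneg_iff.mp this).1

lemma sum_occupation (hA : A.IsHermitian) (τ : Matrix ι ι ℂ) :
    ∑ ν, occupation hA τ ν = τ.trace.re := by
  simp only [occupation]
  rw [← Complex.re_sum]
  change (trace (star (hA.eigenvectorUnitary : Matrix ι ι ℂ) * τ *
    (hA.eigenvectorUnitary : Matrix ι ι ℂ))).re = _
  rw [trace_mul_cycle, (hA.eigenvectorUnitary).2.2, one_mul]

lemma sum_eigProj (hA : A.IsHermitian) (M : Finset ι) :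
    ∑ ν ∈ M, eigProj hA ν = (hA.eigenvectorUnitary : Matrix ι ι ℂ) *
      diagonal (fun ν => if ν ∈ M then 1 else 0) * star (hA.eigenvectorUnitary : Matrix ι ι ℂ) := by
  simp only [eigProj]
  rw [← Finset.sum_mul, ← Finset.mul_sum]
  congr 2
  rw [← sum_single_eq_diagonal]
  simp [apply_ite (single _ _), Finset.sum_ite_mem]

lemma occupation_eq_zero_of_supportedOn (hA : A.IsHermitian) {M : Finset ι} {τ : Matrix ι ι ℂ}
    (hs : SupportedOn hA M τ) {ν : ι} (hν : ν ∉ M) : occupation hA τ ν = 0 := by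
  unfold SupportedOn at hs
  rw [sum_eigProj] at hs
  set U : Matrix ι ι ℂ := (hA.eigenvectorUnitary : Matrix ι ι ℂ)
  set D : Matrix ι ι ℂ := diagonal (fun ν => if ν ∈ M then 1 else 0)
  have hσ : star U * τ * U = D * (star U * τ * U) * D := by
    have hUU : star U * U = 1 := hA.eigenvectorUnitary.2.1
    conv_lhs => rw [← hs]
    simp only [← mul_assoc, hUU, one_mul]
    simp only [mul_assoc, hUU, mul_one]
  rw [occupation, hσ, mul_diagonal, diagonal_mul]
  simp [hν]

lemma re_trace_mul_cfc (hA : A.IsHermitian) (τ : Matrix ι ι ℂ) (f : ℝ → ℝ) :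
    (τ * cfc f A).trace.re = ∑ ν, occupation hA τ ν * f (hA.eigenvalues ν) := by
  simp [trace_mul_cfc hA, Complex.re_sum, occupation]

lemma le_re_trace_mul_cfc (hA : A.IsHermitian) {M : Finset ι} {τ : Matrix ι ι ℂ}
    (hτ : IsDensity τ) (hs : SupportedOn hA M τ) {f : ℝ → ℝ} {b : ℝ}
    (hb : ∀ ν ∈ M, b ≤ f (hA.eigenvalues ν)) : b ≤ (τ * cfc f A).trace.re := by
  calc b = ∑ ν, occupation hA τ ν * b := by
        rw [← Finset.sum_mul, sum_occupation, hτ.2, Complex.one_re, one_mul]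
    _ ≤ ∑ ν, occupation hA τ ν * f (hA.eigenvalues ν) := by
        refine Finset.sum_le_sum fun ν _ => ?_
        by_cases hν : ν ∈ M
        · exact mul_le_mul_of_nonneg_left (hb ν hν) (occupation_nonneg hA hτ.1 ν)
        · simp [occupation_eq_zero_of_supportedOn hA hs hν]
    _ = (τ * cfc f A).trace.re := (re_trace_mul_cfc hA τ f).symm

end FunctionalCalculus

section Gibbs

open Matrix

variable {ι : Type*} [Fintype ι] [DecidableEq ι] {H : Matrix ι ι ℂ}

lemma exp_neg_inv_smul_eq_cfc (hH : H.IsHermitian) (T : ℝ) :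
    NormedSpace.exp ((-(T : ℂ))⁻¹ • H) = cfc (fun x => Real.exp (-x / T)) H := by
  have hc : (-(T : ℂ))⁻¹ = (((-T)⁻¹ : ℝ) : ℂ) := by push_cast; rfl
  rw [hc, exp_real_smul_eq_cfc hH]
  congr 1
  ext x
  congr 1
  ring

lemma partZ_eq_sum (hH : H.IsHermitian) (T : ℝ) :
    partZ H T = ((∑ ν, Real.exp (-(hH.eigenvalues ν) / T) : ℝ) : ℂ) := by
  rw [partZ, exp_neg_inv_smul_eq_cfc hH, ← one_mul (cfc _ H), trace_mul_cfc hH]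
  simp [hH.eigenvectorUnitary.2.1]

lemma gibbs_eq_cfc (hH : H.IsHermitian) (T : ℝ) :
    gibbs H T = cfc (fun x => Real.exp (-x / T) / (partZ H T).re) H := by
  rw [gibbs, ← partZ, partZ_eq_sum hH, exp_neg_inv_smul_eq_cfc hH, Complex.ofReal_re]
  set Z := ∑ ν, Real.exp (-(hH.eigenvalues ν) / T)
  simp_rw [div_eq_inv_mul (Real.exp _) Z]
  rw [cfc_const_mul _ (fun x => Real.exp (-x / T)) H, ← Complex.ofReal_inv, Complex.coe_smul]

lemma mlog2_gibbs (hH : H.IsHermitian) (T : ℝ) :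
    mlog2 (gibbs H T) = cfc (fun x => Real.logb 2 (Real.exp (-x / T) / (partZ H T).re)) H := by
  have hρ : (cfc (fun x => Real.exp (-x / T) / (partZ H T).re) H).IsHermitian :=
    cfc_predicate _ H
  rw [gibbs_eq_cfc hH, mlog2, mfun_eq_cfc hρ,
    ← cfc_comp' (Real.logb 2) _ H ((finite_real_spectrum.image _).continuousOn _)]

end Gibbs

lemma relEnt_eq_neg_vnEnt_sub {ι : Type*} [Fintype ι] [DecidableEq ι] (τ ρ : Matrix ι ι ℂ) :
    relEnt τ ρ = -vnEnt τ - (τ * mlog2 ρ).trace.re := by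
  rw [relEnt, vnEnt, mul_sub, Matrix.trace_sub, Complex.sub_re, neg_neg]

section Microcanonical

variable {ι : Type*} [Fintype ι] [DecidableEq ι] {H : Matrix ι ι ℂ} (hH : H.IsHermitian)
  {T e δ : ℝ} {N : ℕ}

include hH in
lemma partZ_re_pos [Nonempty ι] (T : ℝ) : 0 < (partZ H T).re := by
  rw [partZ_eq_sum hH, Complex.ofReal_re]
  exact Finset.sum_pos (fun _ _ => Real.exp_pos _) Finset.univ_nonempty

lemma mem_microSet {ν : ι} :
    ν ∈ microSet hH e δ N ↔ |hH.eigenvalues ν - e * N| ≤ δ * Real.sqrt N := by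
  simp [microSet]

lemma partZmicro_pos (hM : (microSet hH e δ N).Nonempty) : 0 < partZmicro hH T e δ N :=
  Finset.sum_pos (fun _ _ => Real.exp_pos _) hM

lemma partZmicro_le (hT : 0 ≤ T) :
    partZmicro hH T e δ N
      ≤ (microSet hH e δ N).card * Real.exp ((δ * Real.sqrt N - e * N) / T) := by
  rw [← nsmul_eq_mul, ← Finset.sum_const]
  refine Finset.sum_le_sum fun ν hν => ?_
  have := (abs_le.mp ((mem_microSet hH).mp hν)).1
  gcongr
  linarith

lemma partZ_re_mul_exp_le (hT : 0 ≤ T) {et δt : ℝ} (hMt : (microSet hH et δt N).Nonempty)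
    {ν : ι} (hν : ν ∈ microSet hH e δ N) :
    (partZ H T).re * Real.exp (hH.eigenvalues ν / T)
      ≤ (partZ H T).re / partZmicro hH T et δt N * (microSet hH et δt N).card
          * Real.exp ((e * N - et * N + δ * Real.sqrt N + δt * Real.sqrt N) / T) := by
  have := hMt.to_type
  have hZ := partZ_re_pos hH T
  have hZt := partZmicro_pos hH (T := T) hMt
  have hE := (abs_le.mp ((mem_microSet hH).mp hν)).2
  calc (partZ H T).re * Real.exp (hH.eigenvalues ν / T)
      = (partZ H T).re / partZmicro hH T et δt N
          * (partZmicro hH T et δt N * Real.exp (hH.eigenvalues ν / T)) := by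
        field_simp
    _ ≤ (partZ H T).re / partZmicro hH T et δt N
          * ((microSet hH et δt N).card * Real.exp ((δt * Real.sqrt N - et * N) / T)
            * Real.exp ((e * N + δ * Real.sqrt N) / T)) := by
        gcongr
        · exact partZmicro_le hH hT
        · linarith
    _ = _ := by
        have hexp : Real.exp ((δt * Real.sqrt N - et * N) / T)
            * Real.exp ((e * N + δ * Real.sqrt N) / T)
            = Real.exp ((e * N - et * N + δ * Real.sqrt N + δt * Real.sqrt N) / T) := by
          rw [← Real.exp_add]
          ring_nf
        rw [← hexp]
        ring

end Microcanonical

theorem statement_15_general {ι : Type*} [Fintype ι] [DecidableEq ι]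
    (N : ℕ)
    (H : Matrix ι ι ℂ) (hH : H.IsHermitian) (T : ℝ) (hT : 0 < T)
    (e δ et δt : ℝ)
    (hMt : (microSet hH et δt N).Nonempty)
    (τ : Matrix ι ι ℂ) (hτ : IsDensity τ)
    (hsupp : SupportedOn hH (microSet hH e δ N) τ) :
    relEnt τ (gibbs H T)
      ≤ -vnEnt τ + Real.logb 2 ((partZ H T).re / partZmicro hH T et δt N
          * ((microSet hH et δt N).card : ℝ)
          * Real.exp ((e * N - et * N + δ * Real.sqrt N + δt * Real.sqrt N) / T)) := by
  have := hMt.to_type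
  rw [relEnt_eq_neg_vnEnt_sub, mlog2_gibbs hH, sub_eq_add_neg, add_le_add_iff_left, neg_le]
  refine le_re_trace_mul_cfc hH hτ hsupp fun ν hν => ?_
  rw [neg_le, ← Real.logb_inv, inv_div, div_eq_mul_inv, ← Real.exp_neg, neg_div, neg_neg]
  exact Real.logb_le_logb_of_le one_lt_two (by have := partZ_re_pos hH T; positivity)
    (partZ_re_mul_exp_le hH hT.le hMt hν)

/-- Eq. (40) in the proof of Lemma 7: a bound on the relative entropy
to the Gibbs state of any state supported on the microcanonical subspace, in terms of
a restricted partition function. -/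
theorem statement_15 {ι : Type*} [Fintype ι] [DecidableEq ι]
    (N : ℕ) (hN : 1 ≤ N)
    (H : Matrix ι ι ℂ) (hH : H.IsHermitian) (T : ℝ) (hT : 0 < T)
    (e δ et δt : ℝ) (hδ : 0 < δ) (hδt : 0 < δt)
    (hM : (microSet hH e δ N).Nonempty) (hMt : (microSet hH et δt N).Nonempty)
    (τ : Matrix ι ι ℂ) (hτ : IsDensity τ)
    (hsupp : SupportedOn hH (microSet hH e δ N) τ) :
    relEnt τ (gibbs H T)
      ≤ -vnEnt τ + Real.logb 2 ((partZ H T).re / partZmicro hH T et δt N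
          * ((microSet hH et δt N).card : ℝ)
          * Real.exp ((e * N - et * N + δ * Real.sqrt N + δt * Real.sqrt N) / T)) :=
  statement_15_general N H hH T hT e δ et δt hMt τ hτ hsupp
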